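/- Let R and S be orthogonal projections on a real Hilbert space H with ker(R) ∩ ker(S) = {0}, r ∈ ran(R), s ∈ ran(S), and τ ∈ (0,1). With f₀ = argmin{‖Sf − s‖ : Rf = r} and f₁ = argmin{‖Rf − r‖ : Sf = s}, the minimizer f_τ of f ↦ (1−τ)‖Rf − r‖² + τ‖Sf − s‖² equals the convex combination (1−τ) f₀ + τ f₁. -/

import Mathlib

/-!
The first-order conditions for the two constrained problems say that the residuals
`u = R f₁ - r` and `v = S f₀ - s` are orthogonal to `ker S`, resp. `ker R`, so each of them is
fixed by both projections. Since `u + v = (R - S) (f₁ - f₀)`, self-adjointness gives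
`‖u + v‖² = ⟪(R - S) (u + v), f₁ - f₀⟫ = 0`. At `f_τ = (1 - τ) f₀ + τ f₁` the residuals of the
penalized problem are `τ u` and `(1 - τ) v`, so its gradient is a multiple of `u + v` and
vanishes; the functional is then `J(f_τ) + (1 - τ) ‖R h‖² + τ ‖S h‖²` at `f_τ + h`, and the
second term is positive for `h ≠ 0` because `ker R ⊓ ker S = ⊥`.
-/

open scoped InnerProductSpace

section Variational

variable {E F G : Type*} [NormedAddCommGroup F] [InnerProductSpace ℝ F]

theorem real_inner_eq_zero_of_forall_norm_le_norm_add_smul {x y : F}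
    (h : ∀ t : ℝ, ‖x‖ ≤ ‖x + t • y‖) : ⟪x, y⟫_ℝ = 0 := by
  have hmin : IsLocalMin (fun t : ℝ => ‖x + t • y‖ ^ 2) 0 :=
    Filter.Eventually.of_forall fun t => by
      simpa using pow_le_pow_left₀ (norm_nonneg _) (h t) 2
  have hderiv : HasDerivAt (fun t : ℝ => ‖x + t • y‖ ^ 2) (2 * ⟪x, y⟫_ℝ) 0 := by
    simpa using ((hasDerivAt_id (0 : ℝ)).smul_const y |>.const_add x).norm_sq
  simpa using hmin.hasDerivAt_eq_zero hderiv

variable [AddCommGroup E] [Module ℝ E] [AddCommGroup G] [Module ℝ G]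

theorem IsMinOn.real_inner_apply_eq_zero {P : E →ₗ[ℝ] F} {Q : E →ₗ[ℝ] G} {p : F} {q : G}
    {f₀ k : E}
    (hmin : IsMinOn (fun f => ‖P f - p‖) {f | Q f = q} f₀) (hf₀ : Q f₀ = q) (hk : Q k = 0) :
    ⟪P f₀ - p, P k⟫_ℝ = 0 := by
  refine real_inner_eq_zero_of_forall_norm_le_norm_add_smul fun t => ?_
  have hmem : Q (f₀ + t • k) = q := by simp [hf₀, hk]
  simpa [sub_add_eq_add_sub] using hmin hmem

end Variational

section Quadratic

variable {E F G : Type*} [AddCommGroup E] [Module ℝ E]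
  [NormedAddCommGroup F] [InnerProductSpace ℝ F] [NormedAddCommGroup G] [InnerProductSpace ℝ G]
  {A : E →ₗ[ℝ] F} {B : E →ₗ[ℝ] G} {a b : ℝ} {r : F} {s : G} {f : E}

theorem weighted_norm_sq_eq_add_of_inner_eq_zero
    (hf : ∀ d, a * ⟪A f - r, A d⟫_ℝ + b * ⟪B f - s, B d⟫_ℝ = 0) (g : E) :
    a * ‖A g - r‖ ^ 2 + b * ‖B g - s‖ ^ 2 =
      (a * ‖A f - r‖ ^ 2 + b * ‖B f - s‖ ^ 2) + (a * ‖A (g - f)‖ ^ 2 + b * ‖B (g - f)‖ ^ 2) := by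
  have hA : A g - r = (A f - r) + A (g - f) := by rw [map_sub]; abel
  have hB : B g - s = (B f - s) + B (g - f) := by rw [map_sub]; abel
  rw [hA, hB, norm_add_sq_real, norm_add_sq_real]
  linear_combination 2 * hf (g - f)

theorem isMinOn_weighted_norm_sq_of_inner_eq_zero (ha : 0 ≤ a) (hb : 0 ≤ b)
    (hf : ∀ d, a * ⟪A f - r, A d⟫_ℝ + b * ⟪B f - s, B d⟫_ℝ = 0) :
    IsMinOn (fun g => a * ‖A g - r‖ ^ 2 + b * ‖B g - s‖ ^ 2) Set.univ f := fun g _ => by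
  have := weighted_norm_sq_eq_add_of_inner_eq_zero hf g
  simp only [Set.mem_ofPred_eq]
  nlinarith [mul_nonneg ha (sq_nonneg ‖A (g - f)‖), mul_nonneg hb (sq_nonneg ‖B (g - f)‖)]

theorem eq_of_isMinOn_weighted_norm_sq (ha : 0 < a) (hb : 0 < b)
    (hker : LinearMap.ker A ⊓ LinearMap.ker B = ⊥)
    (hf : ∀ d, a * ⟪A f - r, A d⟫_ℝ + b * ⟪B f - s, B d⟫_ℝ = 0) {g : E}
    (hg : IsMinOn (fun g => a * ‖A g - r‖ ^ 2 + b * ‖B g - s‖ ^ 2) Set.univ g) : g = f := by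
  have hle := hg (Set.mem_univ f)
  simp only [Set.mem_ofPred_eq, weighted_norm_sq_eq_add_of_inner_eq_zero hf g] at hle
  have hsum : a * ‖A (g - f)‖ ^ 2 + b * ‖B (g - f)‖ ^ 2 = 0 := by
    refine le_antisymm (by linarith) (by positivity)
  obtain ⟨hA, hB⟩ := (add_eq_zero_iff_of_nonneg (by positivity) (by positivity)).1 hsum
  simp only [mul_eq_zero, ha.ne', hb.ne', false_or, pow_eq_zero_iff two_ne_zero,
    norm_eq_zero] at hA hB
  have : g - f ∈ LinearMap.ker A ⊓ LinearMap.ker B := ⟨hA, hB⟩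
  rwa [hker, Submodule.mem_bot, sub_eq_zero] at this

end Quadratic

namespace IsStarProjection

variable {𝕜 H : Type*} [RCLike 𝕜] [NormedAddCommGroup H] [InnerProductSpace 𝕜 H]
  [CompleteSpace H] {P Q : H →L[𝕜] H}

theorem apply_apply (hP : IsStarProjection P) (x : H) : P (P x) = P x :=
  congr($hP.isIdempotentElem.eq x)

theorem apply_apply_sub (hP : IsStarProjection P) {p : H} (hp : P p = p) (x : H) :
    P (P x - p) = P x - p := by
  rw [map_sub, hP.apply_apply, hp]

theorem inner_apply_left (hP : IsStarProjection P) (x y : H) : ⟪P x, y⟫_𝕜 = ⟪x, P y⟫_𝕜 :=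
  hP.isSelfAdjoint.isSymmetric x y

theorem apply_eq_self_of_forall_inner_ker (hP : IsStarProjection P) {v : H}
    (hv : ∀ k, P k = 0 → ⟪v, k⟫_𝕜 = 0) : P v = v := by
  have hker : P (v - P v) = 0 := by rw [map_sub, hP.apply_apply, sub_self]
  have hPv : ⟪P v, v - P v⟫_𝕜 = 0 := by rw [hP.inner_apply_left, hker, inner_zero_right]
  have : ⟪v - P v, v - P v⟫_𝕜 = 0 := by rw [inner_sub_left, hv _ hker, hPv, sub_zero]
  exact (sub_eq_zero.1 (inner_self_eq_zero.1 this)).symm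

theorem eq_zero_of_eq_apply_sub_apply (hP : IsStarProjection P) (hQ : IsStarProjection Q)
    {w d : H} (hPw : P w = w) (hQw : Q w = w) (hw : w = P d - Q d) : w = 0 := by
  refine inner_self_eq_zero (𝕜 := 𝕜) |>.1 ?_
  nth_rw 1 [hw]
  rw [inner_sub_left, hP.inner_apply_left, hQ.inner_apply_left, hPw, hQw, sub_self]

end IsStarProjection

section Residuals

variable {H : Type*} [NormedAddCommGroup H] [InnerProductSpace ℝ H] [CompleteSpace H]
  {R S : H →L[ℝ] H} {r s : H} {f₀ f₁ : H}

theorem IsStarProjection.apply_residual_eq_self_of_isMinOn (hR : IsStarProjection R)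
    (hS : IsStarProjection S) (hs : S s = s) (hf₀ : R f₀ = r)
    (hmin : IsMinOn (fun f => ‖S f - s‖) {f | R f = r} f₀) :
    R (S f₀ - s) = S f₀ - s := by
  refine hR.apply_eq_self_of_forall_inner_ker fun k hk => ?_
  rw [← hS.apply_apply_sub hs, hS.inner_apply_left]
  exact IsMinOn.real_inner_apply_eq_zero (P := (S : H →ₗ[ℝ] H)) (Q := (R : H →ₗ[ℝ] H))
    hmin hf₀ hk

theorem IsStarProjection.residual_add_residual_eq_zero (hR : IsStarProjection R)
    (hS : IsStarProjection S) (hf₀ : R f₀ = r)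
    (hmin₀ : IsMinOn (fun f => ‖S f - s‖) {f | R f = r} f₀) (hf₁ : S f₁ = s)
    (hmin₁ : IsMinOn (fun f => ‖R f - r‖) {f | S f = s} f₁) :
    (R f₁ - r) + (S f₀ - s) = 0 := by
  have hr : R r = r := hf₀ ▸ hR.apply_apply f₀
  have hs : S s = s := hf₁ ▸ hS.apply_apply f₁
  refine hR.eq_zero_of_eq_apply_sub_apply hS (d := f₁ - f₀) ?_ ?_ ?_
  · rw [map_add, hR.apply_apply_sub hr, hR.apply_residual_eq_self_of_isMinOn hS hs hf₀ hmin₀]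
  · rw [map_add, hS.apply_apply_sub hs, hS.apply_residual_eq_self_of_isMinOn hR hr hf₁ hmin₁]
  · simp only [map_sub, hf₀, hf₁]; abel

theorem IsStarProjection.inner_residual_convexComb_eq_zero
    (hR : IsStarProjection R) (hS : IsStarProjection S) (hf₀ : R f₀ = r) (hf₁ : S f₁ = s)
    (hcancel : (R f₁ - r) + (S f₀ - s) = 0) (τ : ℝ) (d : H) :
    (1 - τ) * ⟪R ((1 - τ) • f₀ + τ • f₁) - r, R d⟫_ℝ
      + τ * ⟪S ((1 - τ) • f₀ + τ • f₁) - s, S d⟫_ℝ = 0 := by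
  have hRτ : R ((1 - τ) • f₀ + τ • f₁) - r = τ • (R f₁ - r) := by
    rw [map_add, map_smul, map_smul, hf₀]; module
  have hSτ : S ((1 - τ) • f₀ + τ • f₁) - s = (1 - τ) • (S f₀ - s) := by
    rw [map_add, map_smul, map_smul, hf₁]; module
  have hcancel_d : ⟪R f₁ - r, d⟫_ℝ + ⟪S f₀ - s, d⟫_ℝ = 0 := by
    rw [← inner_add_left, hcancel, inner_zero_left]
  rw [hRτ, hSτ, real_inner_smul_left, real_inner_smul_left, ← hR.inner_apply_left,
    ← hS.inner_apply_left, hR.apply_apply_sub (hf₀ ▸ hR.apply_apply f₀),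
    hS.apply_apply_sub (hf₁ ▸ hS.apply_apply f₁)]
  linear_combination τ * (1 - τ) * hcancel_d

end Residuals

theorem stmt_4_general
    {H : Type*} [NormedAddCommGroup H] [InnerProductSpace ℝ H] [CompleteSpace H]
    (R S : H →L[ℝ] H)
    (hR : IsSelfAdjoint R) (hRi : R ∘L R = R)
    (hS : IsSelfAdjoint S) (hSi : S ∘L S = S)
    (hker : LinearMap.ker (R : H →ₗ[ℝ] H) ⊓ LinearMap.ker (S : H →ₗ[ℝ] H) = ⊥)
    (r s : H)
    (τ : ℝ) (hτ : τ ∈ Set.Ioo (0 : ℝ) 1)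
    (f₀ f₁ : H)
    (hf₀ : R f₀ = r ∧ IsMinOn (fun f : H => ‖S f - s‖) {f : H | R f = r} f₀)
    (hf₁ : S f₁ = s ∧ IsMinOn (fun f : H => ‖R f - r‖) {f : H | S f = s} f₁) :
    IsMinOn (fun f : H => (1 - τ) * ‖R f - r‖ ^ 2 + τ * ‖S f - s‖ ^ 2) Set.univ
        ((1 - τ) • f₀ + τ • f₁) ∧
    ∀ g : H,
      IsMinOn (fun f : H => (1 - τ) * ‖R f - r‖ ^ 2 + τ * ‖S f - s‖ ^ 2) Set.univ g →
      g = (1 - τ) • f₀ + τ • f₁ := by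
  obtain ⟨hτ₀, hτ₁⟩ := hτ
  obtain ⟨hf₀, hmin₀⟩ := hf₀
  obtain ⟨hf₁, hmin₁⟩ := hf₁
  have hRp : IsStarProjection R := ⟨hRi, hR⟩
  have hSp : IsStarProjection S := ⟨hSi, hS⟩
  have hgrad := hRp.inner_residual_convexComb_eq_zero hSp hf₀ hf₁
    (hRp.residual_add_residual_eq_zero hSp hf₀ hmin₀ hf₁ hmin₁) τ
  exact ⟨isMinOn_weighted_norm_sq_of_inner_eq_zero (A := (R : H →ₗ[ℝ] H))
      (B := (S : H →ₗ[ℝ] H)) (by linarith) hτ₀.le hgrad,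
    fun g hg => eq_of_isMinOn_weighted_norm_sq (A := (R : H →ₗ[ℝ] H)) (B := (S : H →ₗ[ℝ] H))
      (by linarith) hτ₀ hker hgrad hg⟩

/-- For orthogonal projections `R, S` with trivial common kernel, the minimizer of the
regularization functional is the convex combination `(1-τ)f₀ + τf₁`. -/
theorem stmt_4
    {H : Type*} [NormedAddCommGroup H] [InnerProductSpace ℝ H] [CompleteSpace H]
    (R S : H →L[ℝ] H)
    (hR : IsSelfAdjoint R) (hRi : R ∘L R = R)
    (hS : IsSelfAdjoint S) (hSi : S ∘L S = S)
    (hker : LinearMap.ker (R : H →ₗ[ℝ] H) ⊓ LinearMap.ker (S : H →ₗ[ℝ] H) = ⊥)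
    (r s : H) (hr : r ∈ LinearMap.range (R : H →ₗ[ℝ] H)) (hs : s ∈ LinearMap.range (S : H →ₗ[ℝ] H))
    (τ : ℝ) (hτ : τ ∈ Set.Ioo (0 : ℝ) 1)
    (f₀ f₁ : H)
    (hf₀ : R f₀ = r ∧ IsMinOn (fun f : H => ‖S f - s‖) {f : H | R f = r} f₀)
    (hf₁ : S f₁ = s ∧ IsMinOn (fun f : H => ‖R f - r‖) {f : H | S f = s} f₁) :
    IsMinOn (fun f : H => (1 - τ) * ‖R f - r‖ ^ 2 + τ * ‖S f - s‖ ^ 2) Set.univ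
        ((1 - τ) • f₀ + τ • f₁) ∧
    ∀ g : H,
      IsMinOn (fun f : H => (1 - τ) * ‖R f - r‖ ^ 2 + τ * ‖S f - s‖ ^ 2) Set.univ g →
      g = (1 - τ) • f₀ + τ • f₁ :=
  stmt_4_general R S hR hRi hS hSi hker r s τ hτ f₀ f₁ hf₀ hf₁
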